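/- Let q be a complex number with 0 < |q| < 1. Then ∑_{n=0}^∞ (q;q²)_n q^n / (−q;q²)_{n+1} = ∑_{n=0}^∞ (−1)^n q^{2n(n+1)}. -/

import Mathlib

/-!
Write `G(x) = ∑ₙ (x;q²)ₙ xⁿ / (-x;q²)ₙ₊₁` and `vₙ = (x;q²)ₙ / (-x;q²)ₙ`, so that
`(1 + x q²ⁿ) vₙ₊₁ = (1 - x q²ⁿ) vₙ`. This recurrence makes the summands of `G(x)` equal to
`xⁿ (vₙ + vₙ₊₁) / 2` and, as `vₙ(x q²)` is a constant multiple of `vₙ₊₁(x)`, those of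
`x² q² G(x q²)` equal to a fixed multiple of `xⁿ⁺¹ (vₙ₊₁ - vₙ₊₂)`. Comparing the two series gives
`G(x) + x² q² G(x q²) = 1`. With `aₖ = (-1)ᵏ q^{2k(k+1)}` this says
`aₖ G(q^{2k+1}) = aₖ + aₖ₊₁ G(q^{2k+3})`; as `G` is bounded on `|x| ≤ |q|`, telescoping gives
`G(q) = ∑ₖ aₖ`.
-/

open Finset

/-- The finite q-shifted factorial `(a;q)_n`. -/
noncomputable def qPoch (a q : ℂ) (n : ℕ) : ℂ := ∏ j ∈ Finset.range n, (1 - a * q ^ j)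

/-- The infinite q-shifted factorial `(a;q)_∞`. -/
noncomputable def qPochInf (a q : ℂ) : ℂ := ∏' j : ℕ, (1 - a * q ^ j)

open Filter Topology

theorem hasSum_of_eq_add_succ {α : Type*} [AddCommGroup α] [TopologicalSpace α]
    [IsTopologicalAddGroup α] [T2Space α] {a f : ℕ → α} (h : ∀ k, f k = a k + f (k + 1))
    (hf : Tendsto f atTop (𝓝 0)) (ha : Summable a) : HasSum a (f 0) := by
  have partial_sum : ∀ N, ∑ k ∈ range N, a k = f 0 - f N := by
    intro N
    induction N with
    | zero => simp
    | succ N ih => rw [sum_range_succ, ih, h N]; abel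
  have hlim : Tendsto (fun N ↦ ∑ k ∈ range N, a k) atTop (𝓝 (f 0)) := by
    simpa [partial_sum] using (tendsto_const_nhds (x := f 0)).sub hf
  convert ha.hasSum
  exact tendsto_nhds_unique hlim ha.hasSum.tendsto_sum_nat

section NormLtOne

variable {𝕜 : Type*} [NormedDivisionRing 𝕜] {z Q : 𝕜}

theorem norm_pow_lt_one (hz : ‖z‖ < 1) (n : ℕ) (hn : n ≠ 0) : ‖z ^ n‖ < 1 := by
  rw [norm_pow]
  exact pow_lt_one₀ (norm_nonneg z) hz hn

theorem norm_mul_pow_lt_one (hz : ‖z‖ < 1) (hQ : ‖Q‖ ≤ 1) (j : ℕ) : ‖z * Q ^ j‖ < 1 := by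
  rw [norm_mul, norm_pow]
  exact (mul_le_of_le_one_right (norm_nonneg z) (pow_le_one₀ (norm_nonneg Q) hQ)).trans_lt hz

theorem one_sub_ne_zero_of_norm_lt_one (hz : ‖z‖ < 1) : 1 - z ≠ 0 := by
  rw [sub_ne_zero]
  rintro rfl
  simp at hz

end NormLtOne

theorem qPoch_succ (a Q : ℂ) (n : ℕ) : qPoch a Q (n + 1) = qPoch a Q n * (1 - a * Q ^ n) :=
  prod_range_succ _ n

theorem qPoch_succ' (a Q : ℂ) (n : ℕ) : qPoch a Q (n + 1) = (1 - a) * qPoch (a * Q) Q n := by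
  simp only [qPoch, prod_range_succ', pow_zero, mul_one, pow_succ, mul_assoc, mul_comm]

noncomputable def qPochRatio (x Q : ℂ) (n : ℕ) : ℂ := qPoch x Q n / qPoch (-x) Q n

section qPochRatio

variable {x Q : ℂ}

theorem qPochRatio_zero (x Q : ℂ) : qPochRatio x Q 0 = 1 := by simp [qPochRatio, qPoch]

variable (hx : ‖x‖ < 1) (hQ : ‖Q‖ ≤ 1)
include hx hQ

theorem one_add_mul_pow_ne_zero (n : ℕ) : 1 + x * Q ^ n ≠ 0 := by
  simpa using one_sub_ne_zero_of_norm_lt_one (norm_mul_pow_lt_one (z := -x) (by simpa) hQ n)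

theorem qPochRatio_succ_mul (n : ℕ) :
    qPochRatio x Q (n + 1) * (1 + x * Q ^ n) = qPochRatio x Q n * (1 - x * Q ^ n) := by
  have ha := one_add_mul_pow_ne_zero hx hQ n
  simp only [qPochRatio, qPoch_succ, neg_mul, sub_neg_eq_add]
  field_simp

theorem one_add_mul_qPochRatio_succ (n : ℕ) :
    (1 + x) * qPochRatio x Q (n + 1) = (1 - x) * qPochRatio (x * Q) Q n := by
  have h1 : 1 + x ≠ 0 := by simpa using one_add_mul_pow_ne_zero hx hQ 0
  simp only [qPochRatio, qPoch_succ', neg_mul, sub_neg_eq_add]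
  field_simp

theorem qPoch_mul_pow_div_qPoch_succ (n : ℕ) :
    qPoch x Q n * x ^ n / qPoch (-x) Q (n + 1)
      = x ^ n * (qPochRatio x Q n + qPochRatio x Q (n + 1)) / 2 := by
  have ha := one_add_mul_pow_ne_zero hx hQ n
  have hsum : qPochRatio x Q n + qPochRatio x Q (n + 1)
      = 2 * qPochRatio x Q n / (1 + x * Q ^ n) := by
    field_simp
    linear_combination qPochRatio_succ_mul hx hQ n
  rw [hsum, qPoch_succ, qPochRatio, neg_mul, sub_neg_eq_add]
  field_simp

end qPochRatio

theorem norm_one_sub_le_norm_one_add_mul {a : ℂ} {ρ r : ℝ} (ha : ‖a‖ ≤ ρ) (hρr : ρ ≤ r)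
    (hr : r < 1) : ‖1 - a‖ ≤ ‖1 + a‖ * (1 + 2 * ρ / (1 - r)) := by
  have hr' : 0 < 1 - r := by linarith
  have hsub : ‖1 - a‖ ≤ ‖1 + a‖ + 2 * ‖a‖ := by
    calc ‖1 - a‖ = ‖(1 + a) - 2 * a‖ := by congr 1; ring
      _ ≤ ‖1 + a‖ + ‖2 * a‖ := norm_sub_le _ _
      _ = ‖1 + a‖ + 2 * ‖a‖ := by rw [norm_mul, Complex.norm_two]
  have hlow : 1 - r ≤ ‖1 + a‖ := by
    have := norm_sub_norm_le (1 : ℂ) (-a)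
    rw [norm_one, norm_neg, sub_neg_eq_add] at this
    linarith
  have hρ : 0 ≤ ρ := (norm_nonneg a).trans ha
  have hρ_le : 2 * ρ ≤ ‖1 + a‖ * (2 * ρ / (1 - r)) := by
    calc 2 * ρ = (1 - r) * (2 * ρ / (1 - r)) := by field_simp
      _ ≤ ‖1 + a‖ * (2 * ρ / (1 - r)) := by gcongr
  nlinarith

section qPochRatioBound

variable {x Q : ℂ} {r : ℝ}

theorem norm_qPochRatio_le_prod (hQ : ‖Q‖ ≤ 1) (hr : r < 1) (hx : ‖x‖ ≤ r) (n : ℕ) :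
    ‖qPochRatio x Q n‖ ≤ ∏ j ∈ range n, (1 + 2 * (r * ‖Q‖ ^ j) / (1 - r)) := by
  have hr0 : 0 ≤ r := (norm_nonneg x).trans hx
  have hr' : 0 < 1 - r := by linarith
  have hx1 : ‖x‖ < 1 := hx.trans_lt hr
  induction n with
  | zero => simp [qPochRatio_zero]
  | succ n ih =>
    have ha : ‖x * Q ^ n‖ ≤ r * ‖Q‖ ^ n := by
      rw [norm_mul, norm_pow]; gcongr
    have hρr : r * ‖Q‖ ^ n ≤ r := mul_le_of_le_one_right hr0 (pow_le_one₀ (norm_nonneg Q) hQ)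
    have hpos : 0 < ‖1 + x * Q ^ n‖ := norm_pos_iff.2 (one_add_mul_pow_ne_zero hx1 hQ n)
    have hrec := congrArg norm (qPochRatio_succ_mul hx1 hQ n)
    rw [norm_mul, norm_mul] at hrec
    have hfac := norm_one_sub_le_norm_one_add_mul ha hρr hr
    rw [prod_range_succ]
    refine le_of_mul_le_mul_right ?_ hpos
    calc ‖qPochRatio x Q (n + 1)‖ * ‖1 + x * Q ^ n‖
        = ‖qPochRatio x Q n‖ * ‖1 - x * Q ^ n‖ := hrec
      _ ≤ ‖qPochRatio x Q n‖ * (‖1 + x * Q ^ n‖ * (1 + 2 * (r * ‖Q‖ ^ n) / (1 - r))) := by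
        gcongr
      _ ≤ (∏ j ∈ range n, (1 + 2 * (r * ‖Q‖ ^ j) / (1 - r))) *
            (1 + 2 * (r * ‖Q‖ ^ n) / (1 - r)) * ‖1 + x * Q ^ n‖ := by
        rw [mul_comm ‖1 + x * Q ^ n‖, ← mul_assoc]; gcongr

theorem norm_qPochRatio_le (hQ : ‖Q‖ < 1) (hr : r < 1) (hx : ‖x‖ ≤ r) (n : ℕ) :
    ‖qPochRatio x Q n‖ ≤ Real.exp (2 * r / ((1 - r) * (1 - ‖Q‖))) := by
  have hr0 : 0 ≤ r := (norm_nonneg x).trans hx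
  have hr' : 0 < 1 - r := by linarith
  have hQ' : 0 < 1 - ‖Q‖ := by linarith
  calc ‖qPochRatio x Q n‖ ≤ ∏ j ∈ range n, (1 + 2 * (r * ‖Q‖ ^ j) / (1 - r)) :=
        norm_qPochRatio_le_prod hQ.le hr hx n
    _ ≤ Real.exp (∑ j ∈ range n, 2 * (r * ‖Q‖ ^ j) / (1 - r)) :=
        Real.prod_one_add_le_exp_sum _ fun j ↦ by positivity
    _ = Real.exp (2 * r / (1 - r) * ∑ j ∈ range n, ‖Q‖ ^ j) := by
        rw [mul_sum]; congr 1; apply sum_congr rfl; intro j _; ring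
    _ ≤ Real.exp (2 * r / ((1 - r) * (1 - ‖Q‖))) := by
        gcongr
        calc 2 * r / (1 - r) * ∑ j ∈ range n, ‖Q‖ ^ j ≤ 2 * r / (1 - r) * (1 / (1 - ‖Q‖)) := by
              gcongr
              have := geom_sum_Ico_le_of_lt_one (m := 0) (n := n) (norm_nonneg Q) hQ
              rwa [← range_eq_Ico, pow_zero] at this
          _ = 2 * r / ((1 - r) * (1 - ‖Q‖)) := by field_simp

end qPochRatioBound

-- The series `G` above, in base `Q = q²`.
noncomputable def qPochQuotSeries (Q x : ℂ) : ℂ := ∑' n, qPoch x Q n * x ^ n / qPoch (-x) Q (n + 1)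

section qPochQuotSeries

variable {x Q : ℂ}

theorem summable_pow_mul_qPochRatio (hQ : ‖Q‖ < 1) (hx : ‖x‖ < 1) (k : ℕ) :
    Summable fun n ↦ x ^ n * qPochRatio x Q (n + k) :=
  .of_norm_bounded ((summable_geometric_of_lt_one (norm_nonneg x) hx).mul_right _) fun n ↦ by
    rw [norm_mul, norm_pow]
    exact mul_le_mul_of_nonneg_left (norm_qPochRatio_le hQ hx le_rfl _) (by positivity)

theorem norm_qPochQuotSeries_le (hQ : ‖Q‖ < 1) {r : ℝ} (hr : r < 1) (hx : ‖x‖ ≤ r) :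
    ‖qPochQuotSeries Q x‖ ≤ Real.exp (2 * r / ((1 - r) * (1 - ‖Q‖))) * (1 - r)⁻¹ := by
  have hr0 : 0 ≤ r := (norm_nonneg x).trans hx
  refine tsum_of_norm_bounded ((hasSum_geometric_of_lt_one hr0 hr).mul_left _) fun n ↦ ?_
  rw [qPoch_mul_pow_div_qPoch_succ (hx.trans_lt hr) hQ.le, norm_div, norm_mul, norm_pow,
    Complex.norm_two]
  have hv := norm_qPochRatio_le hQ hr hx
  set B := Real.exp (2 * r / ((1 - r) * (1 - ‖Q‖)))
  calc ‖x‖ ^ n * ‖qPochRatio x Q n + qPochRatio x Q (n + 1)‖ / 2 ≤ r ^ n * (B + B) / 2 := by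
        gcongr
        exact (norm_add_le _ _).trans (add_le_add (hv n) (hv (n + 1)))
    _ = B * r ^ n := by ring

theorem sq_mul_qPoch_mul_pow_div_qPoch_succ (hQ : ‖Q‖ ≤ 1) (hx : ‖x‖ < 1) (n : ℕ) :
    x ^ 2 * Q * (qPoch (x * Q) Q n * (x * Q) ^ n / qPoch (-(x * Q)) Q (n + 1))
      = (1 + x) / (2 * (1 - x)) *
          (x ^ (n + 1) * qPochRatio x Q (n + 1) - x ^ (n + 1) * qPochRatio x Q (n + 2)) := by
  have hxQ : ‖x * Q‖ < 1 := by simpa using norm_mul_pow_lt_one hx hQ 1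
  have h1 : 1 - x ≠ 0 := one_sub_ne_zero_of_norm_lt_one hx
  rw [qPoch_mul_pow_div_qPoch_succ hxQ hQ]
  have hw0 := one_add_mul_qPochRatio_succ hx hQ n
  have hw1 := one_add_mul_qPochRatio_succ hx hQ (n + 1)
  have hrec := qPochRatio_succ_mul hx hQ (n + 1)
  rw [div_mul_eq_mul_div, eq_div_iff (mul_ne_zero two_ne_zero h1)]
  linear_combination (-x ^ 2 * Q * x ^ n * Q ^ n) * (hw0 + hw1) + (1 + x) * x * x ^ n * hrec

theorem qPochQuotSeries_add_sq_mul (hQ : ‖Q‖ < 1) (hx : ‖x‖ < 1) :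
    qPochQuotSeries Q x + x ^ 2 * Q * qPochQuotSeries Q (x * Q) = 1 := by
  set v := qPochRatio x Q
  have h1 : 1 - x ≠ 0 := one_sub_ne_zero_of_norm_lt_one hx
  have hv1 : (1 + x) * v 1 = 1 - x := by
    simpa [v, qPochRatio_zero] using one_add_mul_qPochRatio_succ hx hQ.le 0
  obtain ⟨S, hS⟩ : ∃ S, HasSum (fun n ↦ x ^ n * v n) S :=
    summable_pow_mul_qPochRatio hQ hx 0
  obtain ⟨T, hT⟩ : ∃ T, HasSum (fun n ↦ x ^ n * v (n + 1)) T :=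
    summable_pow_mul_qPochRatio hQ hx 1
  have hS' : HasSum (fun n ↦ x ^ (n + 1) * v (n + 1)) (S - 1) := by
    simpa [v, qPochRatio_zero] using (hasSum_nat_add_iff' 1).2 hS
  have hT' : HasSum (fun n ↦ x ^ (n + 1) * v (n + 2)) (T - v 1) := by
    simpa using (hasSum_nat_add_iff' 1).2 hT
  have hST : S - 1 = x * T :=
    hS'.unique (by simpa [pow_succ, mul_comm, mul_left_comm, mul_assoc] using hT.mul_left x)
  have hG : qPochQuotSeries Q x = (S + T) / 2 := by
    rw [← ((hS.add hT).div_const 2).tsum_eq]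
    exact tsum_congr fun n ↦ by rw [qPoch_mul_pow_div_qPoch_succ hx hQ.le]; ring
  have hGQ : x ^ 2 * Q * qPochQuotSeries Q (x * Q)
      = (1 + x) / (2 * (1 - x)) * ((S - 1) - (T - v 1)) := by
    rw [qPochQuotSeries, ← tsum_mul_left,
      ← ((hS'.sub hT').mul_left ((1 + x) / (2 * (1 - x)))).tsum_eq]
    exact tsum_congr (sq_mul_qPoch_mul_pow_div_qPoch_succ hQ.le hx)
  rw [hG, hGQ]
  field_simp
  linear_combination 2 * hST + hv1

end qPochQuotSeries

section

variable {q : ℂ}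

theorem norm_neg_one_pow_mul_pow_le (hq : ‖q‖ < 1) (k : ℕ) :
    ‖(-1) ^ k * q ^ (2 * k * (k + 1))‖ ≤ ‖q‖ ^ k := by
  rw [norm_mul, norm_pow, norm_neg, norm_one, one_pow, one_mul, norm_pow]
  exact pow_le_pow_of_le_one (norm_nonneg q) hq.le (by nlinarith)

theorem neg_one_pow_mul_pow_mul_qPochQuotSeries_eq (hq : ‖q‖ < 1) (k : ℕ) :
    (-1) ^ k * q ^ (2 * k * (k + 1)) * qPochQuotSeries (q ^ 2) (q ^ (2 * k + 1))
      = (-1) ^ k * q ^ (2 * k * (k + 1)) + (-1) ^ (k + 1) * q ^ (2 * (k + 1) * (k + 1 + 1))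
          * qPochQuotSeries (q ^ 2) (q ^ (2 * (k + 1) + 1)) := by
  have hfe := qPochQuotSeries_add_sq_mul (norm_pow_lt_one hq 2 two_ne_zero)
    (norm_pow_lt_one hq (2 * k + 1) (by omega))
  rw [show q ^ (2 * k + 1) * q ^ 2 = q ^ (2 * (k + 1) + 1) by ring] at hfe
  linear_combination (-1) ^ k * q ^ (2 * k * (k + 1)) * hfe

theorem tendsto_neg_one_pow_mul_pow_mul_qPochQuotSeries (hq : ‖q‖ < 1) :
    Tendsto (fun k ↦ (-1) ^ k * q ^ (2 * k * (k + 1)) * qPochQuotSeries (q ^ 2) (q ^ (2 * k + 1)))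
      atTop (𝓝 0) := by
  set C := Real.exp (2 * ‖q‖ / ((1 - ‖q‖) * (1 - ‖q ^ 2‖))) * (1 - ‖q‖)⁻¹
  refine squeeze_zero_norm (a := fun k ↦ ‖q‖ ^ k * C) (fun k ↦ ?_) ?_
  · rw [norm_mul]
    refine mul_le_mul (norm_neg_one_pow_mul_pow_le hq k)
      (norm_qPochQuotSeries_le (norm_pow_lt_one hq 2 two_ne_zero) hq ?_) (norm_nonneg _)
      (by positivity)
    simpa using pow_le_pow_of_le_one (norm_nonneg q) hq.le (show 1 ≤ 2 * k + 1 by omega)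
  · simpa using (tendsto_pow_atTop_nhds_zero_of_lt_one (norm_nonneg q) hq).mul_const C

end

theorem entry_933_general (q : ℂ) (hq1 : ‖q‖ < 1) :
    ∑' n : ℕ, qPoch q (q ^ 2) n * q ^ n / qPoch (-q) (q ^ 2) (n + 1)
    = ∑' n : ℕ, (-1) ^ n * q ^ (2 * n * (n + 1)) := by
  have hsummable : Summable fun k : ℕ ↦ (-1 : ℂ) ^ k * q ^ (2 * k * (k + 1)) :=
    .of_norm_bounded (summable_geometric_of_lt_one (norm_nonneg q) hq1)
      (norm_neg_one_pow_mul_pow_le hq1)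
  have hsum := hasSum_of_eq_add_succ
    (f := fun k ↦ (-1) ^ k * q ^ (2 * k * (k + 1)) * qPochQuotSeries (q ^ 2) (q ^ (2 * k + 1)))
    (neg_one_pow_mul_pow_mul_qPochQuotSeries_eq hq1)
    (tendsto_neg_one_pow_mul_pow_mul_qPochQuotSeries hq1) hsummable
  simpa [qPochQuotSeries] using hsum.tsum_eq.symm

/-- Entry 9.3.3 of Andrews–Berndt. -/
theorem entry_933 (q : ℂ) (hq0 : 0 < ‖q‖) (hq1 : ‖q‖ < 1) :
    ∑' n : ℕ, qPoch q (q ^ 2) n * q ^ n / qPoch (-q) (q ^ 2) (n + 1)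
    = ∑' n : ℕ, (-1) ^ n * q ^ (2 * n * (n + 1)) :=
  entry_933_general q hq1
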